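/- Let d ≥ 1 and let 0 < a < n be coprime integers, and let (x_1,…,x_r) be a list of integers with every x_i ≥ 2 whose Hirzebruch–Jung continued fraction equals dn²/(dna−1). Then the sum from i = 1 to r of (x_i − 2) equals r − d + 2. -/
import Mathlib


/-- Hirzebruch–Jung continued fraction: `hjcf [b₁,…,b_r] = b₁ - 1/(b₂ - 1/(⋯ - 1/b_r))`.
(With the convention `hjcf [] = 0`, so that `hjcf [b] = b` since `1/0 = 0`.) -/
def hjcf : List ℚ → ℚ
  | [] => 0
  | b :: l => b - 1 / hjcf l

/-- Hirzebruch–Jung continued fraction of a list of integers. -/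
def hjcfZ (b : List ℤ) : ℚ := hjcf (b.map (fun x => (x : ℚ)))

/-- The continuant matrix data `(num, den, p, q)` of a list. -/
def cm : List ℤ → ℤ × ℤ × ℤ × ℤ
  | [] => (1, 0, 0, 1)
  | b :: l => (b * (cm l).1 - (cm l).2.1, (cm l).1,
      b * (cm l).2.2.1 - (cm l).2.2.2, (cm l).2.2.1)

def cN (l : List ℤ) : ℤ := (cm l).1
def cD (l : List ℤ) : ℤ := (cm l).2.1
def cP (l : List ℤ) : ℤ := (cm l).2.2.1
def cQ (l : List ℤ) : ℤ := (cm l).2.2.2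

@[simp] lemma cN_nil : cN [] = 1 := rfl
@[simp] lemma cD_nil : cD [] = 0 := rfl
@[simp] lemma cP_nil : cP [] = 0 := rfl
@[simp] lemma cQ_nil : cQ [] = 1 := rfl
@[simp] lemma cN_cons (b : ℤ) (l : List ℤ) : cN (b :: l) = b * cN l - cD l := rfl
@[simp] lemma cD_cons (b : ℤ) (l : List ℤ) : cD (b :: l) = cN l := rfl
@[simp] lemma cP_cons (b : ℤ) (l : List ℤ) : cP (b :: l) = b * cP l - cQ l := rfl
@[simp] lemma cQ_cons (b : ℤ) (l : List ℤ) : cQ (b :: l) = cP l := rfl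

lemma cm_pos : ∀ (l : List ℤ), (∀ xi ∈ l, 2 ≤ xi) → 0 ≤ cD l ∧ cD l < cN l
  | [], _ => by simp
  | b :: l, h => by
    have hb : 2 ≤ b := h b (by simp)
    have ih := cm_pos l (fun xi hxi => h xi (by simp [hxi]))
    simp only [cN_cons, cD_cons]
    constructor
    · linarith [ih.1, ih.2]
    · nlinarith [ih.1, ih.2]

lemma cm_det : ∀ (l : List ℤ), cN l * cQ l - cD l * cP l = 1
  | [] => by simp
  | b :: l => by
    have ih := cm_det l
    simp only [cN_cons, cD_cons, cP_cons, cQ_cons]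
    ring_nf
    linarith [ih]

lemma hjcfZ_nil : hjcfZ [] = 0 := rfl

lemma hjcf_cons (b : ℚ) (l : List ℚ) : hjcf (b :: l) = b - 1 / hjcf l := rfl

lemma hjcfZ_cons (b : ℤ) (l : List ℤ) : hjcfZ (b :: l) = (b : ℚ) - 1 / hjcfZ l := rfl

lemma hjcfZ_eq : ∀ (l : List ℤ), (∀ xi ∈ l, 2 ≤ xi) →
    hjcfZ l = (cN l : ℚ) / (cD l : ℚ)
  | [], _ => by simp [hjcfZ_nil]
  | b :: l, h => by
    have ih := hjcfZ_eq l (fun xi hxi => h xi (by simp [hxi]))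
    have hpos := cm_pos l (fun xi hxi => h xi (by simp [hxi]))
    have hN : (0:ℤ) < cN l := lt_of_le_of_lt hpos.1 hpos.2
    have hNQ : (cN l : ℚ) ≠ 0 := by exact_mod_cast hN.ne'
    rw [hjcfZ_cons, ih, one_div_div]
    simp only [cN_cons, cD_cons]
    push_cast
    field_simp

lemma cm_concat : ∀ (l : List ℤ) (c : ℤ),
    cN (l ++ [c]) = c * cN l + cP l ∧ cD (l ++ [c]) = c * cD l + cQ l ∧
    cP (l ++ [c]) = -cN l ∧ cQ (l ++ [c]) = -cD l
  | [], c => by simp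
  | b :: l, c => by
    obtain ⟨h1, h2, h3, h4⟩ := cm_concat l c
    refine ⟨?_, ?_, ?_, ?_⟩ <;>
      simp only [List.cons_append, cN_cons, cD_cons, cP_cons, cQ_cons, h1, h2, h3, h4] <;>
      ring

lemma cm_reverse : ∀ (l : List ℤ),
    cN l.reverse = cN l ∧ cD l.reverse = -cP l ∧
    cP l.reverse = -cD l ∧ cQ l.reverse = cQ l
  | [] => by simp
  | b :: l => by
    obtain ⟨h1, h2, h3, h4⟩ := cm_reverse l
    obtain ⟨g1, g2, g3, g4⟩ := cm_concat l.reverse b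
    rw [List.reverse_cons]
    refine ⟨?_, ?_, ?_, ?_⟩ <;>
      simp only [g1, g2, g3, g4, h1, h2, h3, h4, cN_cons, cD_cons, cP_cons, cQ_cons] <;>
      ring

lemma cm_uniq : ∀ (N : ℕ), ∀ (b c : List ℤ), (∀ xi ∈ b, 2 ≤ xi) → (∀ xi ∈ c, 2 ≤ xi) →
    cN b = cN c → cD b = cD c → (cN b).natAbs ≤ N → b = c := by
  intro N
  induction N with
  | zero =>
    intro b c hb hc hN hD hle
    have hpos := cm_pos b hb
    have : (0:ℤ) < cN b := lt_of_le_of_lt hpos.1 hpos.2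
    omega
  | succ N ih =>
    intro b c hb hc hN hD hle
    match b, c with
    | [], [] => rfl
    | [], c1 :: t =>
      exfalso
      have hpos := cm_pos t (fun xi hxi => hc xi (by simp [hxi]))
      have : (0:ℤ) < cN t := lt_of_le_of_lt hpos.1 hpos.2
      simp only [cD_nil, cD_cons] at hD
      omega
    | b1 :: t, [] =>
      exfalso
      have hpos := cm_pos t (fun xi hxi => hb xi (by simp [hxi]))
      have : (0:ℤ) < cN t := lt_of_le_of_lt hpos.1 hpos.2
      simp only [cD_nil, cD_cons] at hD
      omega
    | b1 :: t, c1 :: s =>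
      have ht2 : ∀ xi ∈ t, 2 ≤ xi := fun xi hxi => hb xi (by simp [hxi])
      have hs2 : ∀ xi ∈ s, 2 ≤ xi := fun xi hxi => hc xi (by simp [hxi])
      have hpt := cm_pos t ht2
      have hps := cm_pos s hs2
      simp only [cD_cons] at hD
      simp only [cN_cons] at hN
      have hNt : (0:ℤ) < cN t := lt_of_le_of_lt hpt.1 hpt.2
      -- b1 = c1
      have hkey : (b1 - c1) * cN t = cD t - cD s := by rw [hD] at hN ⊢; linarith
      have hb1c1 : b1 = c1 := by
        rcases lt_trichotomy b1 c1 with h | h | h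
        · exfalso
          have : (b1 - c1) * cN t ≤ (-1) * cN t := by
            apply mul_le_mul_of_nonneg_right _ hNt.le; omega
          rw [hD] at hpt
          omega
        · exact h
        · exfalso
          have : (1:ℤ) * cN t ≤ (b1 - c1) * cN t := by
            apply mul_le_mul_of_nonneg_right _ hNt.le; omega
          rw [hD] at hpt
          omega
      have hDt : cD t = cD s := by
        have := hkey
        rw [hb1c1] at this
        simp at this
        omega
      -- recurse
      have hts : t = s := by
        apply ih t s ht2 hs2 hD hDt
        have hb' := cm_pos (b1 :: t) hb
        simp only [cD_cons] at hb'
        omega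
      rw [hb1c1, hts]

lemma cm_replicate : ∀ (k : ℕ),
    cN (List.replicate k 2 ++ [3]) = 2 * k + 3 ∧ cD (List.replicate k 2 ++ [3]) = 2 * k + 1 ∧
    cP (List.replicate k 2 ++ [3]) = -((k:ℤ) + 1) ∧ cQ (List.replicate k 2 ++ [3]) = -(k:ℤ)
  | 0 => by simp
  | k + 1 => by
    obtain ⟨h1, h2, h3, h4⟩ := cm_replicate k
    refine ⟨?_, ?_, ?_, ?_⟩ <;>
      simp only [List.replicate_succ, List.cons_append, cN_cons, cD_cons, cP_cons, cQ_cons,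
        h1, h2, h3, h4] <;>
      push_cast <;> ring

/-- The key "step" operation: from a T-chain for `(d, m, a)` we build one for `(d, m+a, a)`. -/
lemma step (d m a : ℤ) (hd : 1 ≤ d) (hm : 2 ≤ m)
    (x' : List ℤ) (hx2 : ∀ xi ∈ x', 2 ≤ xi)
    (hN : cN x' = d * m ^ 2) (hD : cD x' = d * m * a - 1)
    (hP : cP x' = -(d * m * (m - a) - 1)) (hQ : cQ x' = -(d * a * (m - a) - 1))
    (hs : x'.sum = 3 * x'.length - d + 2) :
    ∃ x : List ℤ, (∀ xi ∈ x, 2 ≤ xi) ∧ cN x = d * (m + a) ^ 2 ∧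
      cD x = d * (m + a) * a - 1 ∧ cP x = -(d * (m + a) * m - 1) ∧
      cQ x = -(d * a * m - 1) ∧ x.sum = 3 * x.length - d + 2 := by
  match x', hx2, hN, hD, hP, hQ, hs with
  | [], hx2, hN, hD, hP, hQ, hs => exfalso; simp at hN; nlinarith
  | h :: t, hx2, hN, hD, hP, hQ, hs =>
    have ht2 : ∀ xi ∈ t, 2 ≤ xi := fun xi hxi => hx2 xi (by simp [hxi])
    have hh : 2 ≤ h := hx2 h (by simp)
    simp only [cN_cons, cD_cons, cP_cons, cQ_cons] at hN hD hP hQ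
    -- stats of t
    have e1 : cN t = d * m * a - 1 := hD
    have e2 : cD t = h * (d * m * a - 1) - d * m ^ 2 := by rw [← e1]; linarith
    have e3 : cP t = -(d * a * (m - a) - 1) := hQ
    have e4 : cQ t = h * (-(d * a * (m - a) - 1)) + (d * m * (m - a) - 1) := by
      rw [← e3]; linarith
    obtain ⟨g1, g2, g3, g4⟩ := cm_concat t 2
    refine ⟨(h + 1) :: (t ++ [2]), ?_, ?_, ?_, ?_, ?_, ?_⟩
    · intro xi hxi
      simp only [List.mem_cons, List.mem_append] at hxi
      rcases hxi with rfl | hxi | hxi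
      · omega
      · exact ht2 xi hxi
      · simp at hxi; omega
    · simp only [cN_cons, cD_cons, g1, g2, e1, e2, e3, e4]; ring
    · simp only [cN_cons, cD_cons, g1, e1, e3]; ring
    · simp only [cP_cons, cQ_cons, g3, g4, e1, e2]; ring
    · simp only [cQ_cons, cP_cons, g3, e1]; ring
    · have hsum : ((h + 1) :: (t ++ [2])).sum = (h :: t).sum + 3 := by
        simp [List.sum_append]; ring
      have hlen : (((h + 1) :: (t ++ [2])).length : ℤ) = ((h :: t).length : ℤ) + 1 := by
        simp
      rw [hsum, hlen, hs]
      ring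

/-- Existence of the T-chain for parameters `(d, n, a)`. -/
lemma exists_chain : ∀ (N : ℕ) (n a d : ℤ), n.natAbs ≤ N → 1 ≤ d → 0 < a → a < n →
    IsCoprime a n →
    ∃ x : List ℤ, (∀ xi ∈ x, 2 ≤ xi) ∧ cN x = d * n ^ 2 ∧
      cD x = d * n * a - 1 ∧ cP x = -(d * n * (n - a) - 1) ∧
      cQ x = -(d * a * (n - a) - 1) ∧ x.sum = 3 * x.length - d + 2 := by
  intro N
  induction N using Nat.strong_induction_on with
  | _ N ih =>
    intro n a d hn hd ha han hcop
    rcases lt_trichotomy (2 * a) n with hlt | heq | hgt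
    · -- 2a < n : use step from (n - a, a)
      have hm : 2 ≤ n - a := by omega
      have hcop' : IsCoprime a (n - a) := by
        have := hcop.add_mul_left_right (-1)
        have hrw : n + a * (-1) = n - a := by ring
        rwa [hrw] at this
      have hNlt : (n - a).natAbs < N := by omega
      obtain ⟨x', p2, pN, pD, pP, pQ, ps⟩ :=
        ih (n - a).natAbs hNlt (n - a) a d le_rfl hd ha (by omega) hcop'
      obtain ⟨x, q2, qN, qD, qP, qQ, qs⟩ := step d (n - a) a hd hm x' p2 pN pD pP pQ ps
      refine ⟨x, q2, ?_, ?_, ?_, ?_, qs⟩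
      · rw [qN]; try ring
      · rw [qD]; try ring
      · rw [qP]; try ring
      · rw [qQ]; try ring
    · -- 2a = n : then a = 1, n = 2
      have ha1 : a = 1 := by
        have h1 : IsCoprime a (a * 2) := by
          have : a * 2 = n := by omega
          rwa [this]
        have h2 : IsCoprime a a := h1.of_mul_right_left
        have h3 : IsUnit a := isCoprime_self.mp h2
        rcases Int.isUnit_iff.mp h3 with h | h
        · exact h
        · omega
      have hn2 : n = 2 := by omega
      subst ha1; subst hn2
      rcases eq_or_lt_of_le hd with hd1 | hd2
      · -- d = 1 : chain [4]
        have hd1' : d = 1 := hd1.symm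
        subst hd1'
        refine ⟨[4], ?_, ?_, ?_, ?_, ?_, ?_⟩
        · intro xi hxi; simp at hxi; omega
        · simp
        · simp
        · simp
        · simp
        · simp
      · -- d ≥ 2 : chain 3 :: 2^(d-2) ++ [3]
        set k : ℕ := (d - 2).toNat with hk
        have hkd : (k : ℤ) = d - 2 := by omega
        obtain ⟨h1, h2, h3, h4⟩ := cm_replicate k
        refine ⟨3 :: (List.replicate k 2 ++ [3]), ?_, ?_, ?_, ?_, ?_, ?_⟩
        · intro xi hxi
          simp only [List.mem_cons, List.mem_append, List.mem_replicate] at hxi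
          rcases hxi with rfl | ⟨-, rfl⟩ | hxi
          · omega
          · omega
          · simp at hxi; omega
        · simp only [cN_cons, cD_cons, h1, h2]; linear_combination (4:ℤ) * hkd
        · simp only [cD_cons, h1]; linear_combination (2:ℤ) * hkd
        · simp only [cP_cons, cQ_cons, h3, h4]; linear_combination (-2:ℤ) * hkd
        · simp only [cQ_cons, h3]; linear_combination (-1:ℤ) * hkd
        · have hsum : (3 :: (List.replicate k 2 ++ [3])).sum = 2 * (k : ℤ) + 6 := by
            simp [List.sum_append, List.sum_replicate]; ring
          rw [hsum]
          simp only [List.length_cons, List.length_append, List.length_replicate,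
            List.length_nil]
          push_cast
          linear_combination (-1:ℤ) * hkd
    · -- 2a > n : use reversal of step from (a, n - a)
      have ha' : 0 < n - a := by omega
      have haa : n - a < a := by omega
      have ha2 : 2 ≤ a := by omega
      have hcop' : IsCoprime (n - a) a := by
        have := (hcop.symm).add_mul_left_left (-1)
        have hrw : n + a * (-1) = n - a := by ring
        rwa [hrw] at this
      have hNlt : a.natAbs < N := by omega
      obtain ⟨x', p2, pN, pD, pP, pQ, ps⟩ :=
        ih a.natAbs hNlt a (n - a) d le_rfl hd ha' haa hcop'
      obtain ⟨y, q2, qN, qD, qP, qQ, qs⟩ := step d a (n - a) hd ha2 x' p2 pN pD pP pQ ps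
      obtain ⟨r1, r2, r3, r4⟩ := cm_reverse y
      refine ⟨y.reverse, ?_, ?_, ?_, ?_, ?_, ?_⟩
      · intro xi hxi; exact q2 xi (List.mem_reverse.mp hxi)
      · rw [r1, qN]; try ring
      · rw [r2, qP]; try ring
      · rw [r3, qD]; try ring
      · rw [r4, qQ]; try ring
      · rw [List.sum_reverse, List.length_reverse]; exact qs

lemma sum_map_sub_two : ∀ (l : List ℤ), (l.map (fun xi => xi - 2)).sum = l.sum - 2 * l.length
  | [] => by simp
  | b :: l => by
    have := sum_map_sub_two l
    simp only [List.map_cons, List.sum_cons, this, List.length_cons]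
    push_cast
    ring

theorem stmt8 (d n a : ℤ) (hd : 1 ≤ d) (ha : 0 < a) (han : a < n)
    (hgcd : Int.gcd a n = 1)
    (x : List ℤ) (h2 : ∀ xi ∈ x, 2 ≤ xi)
    (hcf : hjcfZ x = ((d * n ^ 2 : ℤ) : ℚ) / ((d * n * a - 1 : ℤ) : ℚ)) :
    (x.map (fun xi => xi - 2)).sum = (x.length : ℤ) - d + 2 := by
  have hcop : IsCoprime a n := Int.isCoprime_iff_gcd_eq_one.mpr hgcd
  have hn2 : 2 ≤ n := by omega
  have hq : (0:ℤ) < d * n ^ 2 := by positivity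
  have hp : (0:ℤ) < d * n * a - 1 := by nlinarith
  have hpos := cm_pos x h2
  have hNx : (0:ℤ) < cN x := lt_of_le_of_lt hpos.1 hpos.2
  have hval := hjcfZ_eq x h2
  rw [hval] at hcf
  -- cD x ≠ 0
  have hDx : (0:ℤ) < cD x := by
    rcases hpos.1.lt_or_eq with h | h
    · exact h
    · exfalso
      have h0 : ((cD x : ℤ) : ℚ) = 0 := by rw [← h]; norm_num
      rw [h0, div_zero] at hcf
      have hpos' : (0:ℚ) < ((d * n ^ 2 : ℤ) : ℚ) / ((d * n * a - 1 : ℤ) : ℚ) :=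
        div_pos (by exact_mod_cast hq) (by exact_mod_cast hp)
      rw [← hcf] at hpos'
      exact lt_irrefl 0 hpos'
  -- cross multiply
  have key : cN x * (d * n * a - 1) = d * n ^ 2 * cD x := by
    have hD0 : ((cD x : ℚ)) ≠ 0 := by exact_mod_cast hDx.ne'
    have hp0 : ((d * n * a - 1 : ℤ) : ℚ) ≠ 0 := by exact_mod_cast hp.ne'
    have := (div_eq_div_iff hD0 hp0).mp hcf
    exact_mod_cast this
  have hcp1 : IsCoprime (cN x) (cD x) := ⟨cQ x, -cP x, by linear_combination cm_det x⟩
  have hcp2 : IsCoprime (d * n ^ 2) (d * n * a - 1) :=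
    ⟨-(d * a * (n - a) - 1), d * n * (n - a) - 1, by ring⟩
  have hdvd1 : cN x ∣ d * n ^ 2 := by
    apply hcp1.dvd_of_dvd_mul_right
    exact ⟨d * n * a - 1, by linarith [key]⟩
  have hdvd2 : d * n ^ 2 ∣ cN x := by
    apply hcp2.dvd_of_dvd_mul_right
    exact ⟨cD x, by linarith [key]⟩
  have heqN : cN x = d * n ^ 2 := Int.dvd_antisymm hNx.le hq.le hdvd1 hdvd2
  have heqD : cD x = d * n * a - 1 := by
    have : cN x * (d * n * a - 1) = cN x * cD x := by rw [key, heqN]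
    exact (mul_left_cancel₀ hNx.ne' this).symm
  obtain ⟨y, y2, yN, yD, yP, yQ, ys⟩ :=
    exists_chain n.natAbs n a d le_rfl hd ha han hcop
  have hxy : x = y := by
    apply cm_uniq (cN x).natAbs x y h2 y2 (by rw [heqN, yN]) (by rw [heqD, yD]) le_rfl
  rw [sum_map_sub_two, hxy, ys]
  ring
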